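/- Let p be prime, k < p, G = C_p^k with generators x_1,…,x_k, and 𝔽 = 𝔽_p. Let s ∈ 𝔽_p[G] be a skew-symmetric element. If (∏_{1≤i<j≤k}(x_i - x_j)) · s = 0 in 𝔽_p[G], then s = 0. -/

import Mathlib

/-!
Pull back along `MvPolynomial.aeval x`, which sends `X i` to the generator `x i` of `𝔽_p[G]`.
For every exponent vector `e` the alternant `det (X i ^ e j)` is killed by the substitution
`X a ↦ X b` (two equal rows), so it is divisible by each `X a - X b`; these are pairwise
non-associated primes, hence the Vandermonde product divides the alternant, and the image
`∑ σ, sgn σ • x ^ (e ∘ σ⁻¹)` of the alternant annihilates `s` as well. Taking `e = -γ` and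
reading off the coefficient of `1`, skew-symmetry turns every term into `s(γ)`, so
`k! • s(γ) = 0`, and `k!` is invertible in `𝔽_p` because `k < p`.
-/

open Finset

theorem Finset.prod_primes_dvd_of_pairwise_not_dvd {M ι : Type*} [CommMonoidWithZero M]
    [IsCancelMulZero M] {s : Finset ι} {f : ι → M} {n : M}
    (hprime : ∀ i ∈ s, Prime (f i))
    (hndvd : (s : Set ι).Pairwise fun i j => ¬ f i ∣ f j) (hdvd : ∀ i ∈ s, f i ∣ n) :
    ∏ i ∈ s, f i ∣ n := by
  classical
  induction s using Finset.induction_on generalizing n with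
  | empty => simp
  | insert i s hi ih =>
    rw [prod_insert hi]
    obtain ⟨m, rfl⟩ := hdvd i (mem_insert_self i s)
    refine mul_dvd_mul_left _ (ih (fun j hj => hprime j (mem_insert_of_mem hj))
      (hndvd.mono (by simp)) fun j hj => ?_)
    refine ((hprime j (mem_insert_of_mem hj)).dvd_or_dvd
      (hdvd j (mem_insert_of_mem hj))).resolve_left ?_
    exact hndvd (mem_insert_of_mem hj) (mem_insert_self i s) (ne_of_mem_of_not_mem hj hi)

namespace MvPolynomial

variable {R σ : Type*} [CommRing R] [DecidableEq σ]

theorem X_sub_X_dvd_sub_rename_update (a b : σ) (P : MvPolynomial σ R) :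
    X a - X b ∣ P - rename (Function.update id a b) P := by
  let mk := Ideal.Quotient.mkₐ R (Ideal.span {(X a - X b : MvPolynomial σ R)})
  have hmk : mk.comp (rename (Function.update id a b)) = mk := by
    ext l
    by_cases hl : l = a
    · subst hl
      simpa [mk, Ideal.Quotient.eq, Ideal.mem_span_singleton] using dvd_sub_comm.mp dvd_rfl
    · simp [hl]
  rw [← Ideal.mem_span_singleton, ← Ideal.Quotient.eq, ← Ideal.Quotient.mkₐ_eq_mk R]
  exact (DFunLike.congr_fun hmk P).symm

theorem X_sub_X_dvd_iff_rename_update_eq_zero {a b : σ} {P : MvPolynomial σ R} :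
    X a - X b ∣ P ↔ rename (Function.update id a b) P = 0 := by
  refine ⟨?_, fun h => by simpa [h] using X_sub_X_dvd_sub_rename_update a b P⟩
  rintro ⟨Q, rfl⟩
  simp [Function.update_apply]

theorem prime_X_sub_X [IsDomain R] {a b : σ} (hab : a ≠ b) :
    Prime (X a - X b : MvPolynomial σ R) := by
  refine ⟨sub_ne_zero.mpr (X_injective.ne hab), fun hunit => ?_, fun P Q hPQ => ?_⟩
  · simpa [Function.update_apply] using hunit.map (rename (R := R) (Function.update id a b))
  · simpa only [X_sub_X_dvd_iff_rename_update_eq_zero, map_mul, mul_eq_zero] using hPQ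

theorem eq_and_eq_or_eq_and_eq_of_X_sub_X_dvd [Nontrivial R] {a b c d : σ} (hcd : c ≠ d)
    (h : X a - X b ∣ (X c - X d : MvPolynomial σ R)) : c = a ∧ d = b ∨ c = b ∧ d = a := by
  rw [X_sub_X_dvd_iff_rename_update_eq_zero, map_sub, rename_X, rename_X, sub_eq_zero,
    X_injective.eq_iff, Function.update_apply, Function.update_apply] at h
  grind

theorem X_sub_X_dvd_det_X_pow {ι : Type*} [Fintype ι] [DecidableEq ι] {a b : ι} (hab : a ≠ b)
    (e : ι → ℕ) : X a - X b ∣ (Matrix.of fun i j => (X i : MvPolynomial ι R) ^ e j).det := by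
  rw [X_sub_X_dvd_iff_rename_update_eq_zero, AlgHom.map_det]
  refine Matrix.det_zero_of_row_eq hab ?_
  ext j
  simp [hab.symm]

theorem prod_X_sub_X_dvd_det_X_pow [IsDomain R] {ι : Type*} [Fintype ι] [LinearOrder ι]
    [LocallyFiniteOrderTop ι] (e : ι → ℕ) :
    ∏ i, ∏ j ∈ Ioi i, (X i - X j : MvPolynomial ι R) ∣
      (Matrix.of fun i j => (X i : MvPolynomial ι R) ^ e j).det := by
  have hlt : ∀ q ∈ univ.sigma fun i : ι => Ioi i, q.1 < q.2 := by simp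
  rw [prod_sigma']
  refine prod_primes_dvd_of_pairwise_not_dvd (fun q hq => prime_X_sub_X (hlt q hq).ne) ?_
    fun q hq => X_sub_X_dvd_det_X_pow (hlt q hq).ne e
  intro q hq r hr hqr hdvd
  rcases eq_and_eq_or_eq_and_eq_of_X_sub_X_dvd (hlt r hr).ne hdvd with h | h
  · exact hqr (Sigma.ext h.1.symm (heq_of_eq h.2.symm))
  · exact lt_asymm (hlt q hq) (h.1 ▸ h.2 ▸ hlt r hr)

end MvPolynomial

open Equiv

namespace MonoidAlgebra

variable {R : Type*} [CommRing R] {p : ℕ} {ι : Type*}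

variable (R p) in
noncomputable def zmodPiGenerator [DecidableEq ι] (i : ι) :
    MonoidAlgebra R (Multiplicative (ι → ZMod p)) :=
  of R _ (Multiplicative.ofAdd (Pi.single i 1))

theorem zmodPiGenerator_pow_val [DecidableEq ι] [NeZero p] (i : ι) (c : ZMod p) :
    zmodPiGenerator R p i ^ c.val = single (Multiplicative.ofAdd (Pi.single i c)) 1 := by
  rw [zmodPiGenerator, ← map_pow, ← ofAdd_nsmul, ← Pi.single_smul, nsmul_one,
    ZMod.natCast_zmod_val, of_apply]

theorem det_zmodPiGenerator_pow_val [Fintype ι] [DecidableEq ι] [NeZero p] (v : ι → ZMod p) :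
    (Matrix.of fun i j => zmodPiGenerator R p i ^ (v j).val).det =
      ∑ σ : Perm ι, single (Multiplicative.ofAdd (v ∘ ⇑σ⁻¹)) ((Perm.sign σ : ℤ) : R) := by
  rw [Matrix.det_apply]
  refine sum_congr rfl fun σ _ => ?_
  have hsum : ∑ i, Pi.single (σ i) (v i) = v ∘ ⇑σ⁻¹ := by
    simpa [univ_sum_single, Function.comp_def] using
      Equiv.sum_comp σ fun j => Pi.single j ((v ∘ ⇑σ⁻¹) j)
  simp only [Matrix.of_apply, zmodPiGenerator_pow_val, prod_single, ← ofAdd_sum, hsum,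
    prod_const_one, Units.smul_def, smul_single, zsmul_one]

theorem coeff_one_det_zmodPiGenerator_pow_val_neg_mul [Fintype ι] [DecidableEq ι] [NeZero p]
    (v : ι → ZMod p) (s : MonoidAlgebra R (Multiplicative (ι → ZMod p))) :
    ((Matrix.of fun i j => zmodPiGenerator R p i ^ ((-v) j).val).det * s).coeff 1 =
      ∑ σ : Perm ι, ((Perm.sign σ : ℤ) : R) * s.coeff (Multiplicative.ofAdd (v ∘ ⇑σ⁻¹)) := by
  rw [det_zmodPiGenerator_pow_val, sum_mul, coeff_sum, Finsupp.finsetSum_apply]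
  refine sum_congr rfl fun σ _ => ?_
  rw [coeff_single_mul_apply, mul_one, ← ofAdd_neg, Pi.neg_comp, neg_neg]

theorem det_zmodPiGenerator_pow_mul_eq_zero [IsDomain R] [Fintype ι] [LinearOrder ι]
    [LocallyFiniteOrderTop ι] {s : MonoidAlgebra R (Multiplicative (ι → ZMod p))}
    (hs : (∏ i, ∏ j ∈ Ioi i, (zmodPiGenerator R p i - zmodPiGenerator R p j)) * s = 0)
    (e : ι → ℕ) :
    (Matrix.of fun i j => zmodPiGenerator R p i ^ e j).det * s = 0 := by
  obtain ⟨Q, hQ⟩ := MvPolynomial.prod_X_sub_X_dvd_det_X_pow (R := R) e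
  have hmap := congrArg (MvPolynomial.aeval (zmodPiGenerator R p)) hQ
  have hX : (Matrix.of fun i j => (MvPolynomial.X i : MvPolynomial ι R) ^ e j).map
      (MvPolynomial.aeval (zmodPiGenerator R p)) =
        Matrix.of fun i j => zmodPiGenerator R p i ^ e j := by
    ext; simp
  simp only [AlgHom.map_det, AlgHom.mapMatrix_apply, hX, map_mul, map_prod, map_sub,
    MvPolynomial.aeval_X] at hmap
  rw [hmap, mul_right_comm, hs, zero_mul]

end MonoidAlgebra

theorem skew_symmetric_annihilator_vandermonde_general (p k : ℕ) (hp : p.Prime) [Fact p.Prime]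
    (hk : k < p)
    (s : MonoidAlgebra (ZMod p) (Multiplicative (Fin k → ZMod p)))
    (hskew : ∀ (σ : Equiv.Perm (Fin k)) (γ : Fin k → ZMod p),
      s.coeff (Multiplicative.ofAdd (γ ∘ ⇑σ⁻¹)) =
        ((Equiv.Perm.sign σ : ℤ) : ZMod p) * s.coeff (Multiplicative.ofAdd γ))
    (hann : (∏ i : Fin k, ∏ j ∈ Finset.Ioi i,
        ((MonoidAlgebra.of (ZMod p) (Multiplicative (Fin k → ZMod p))
            (Multiplicative.ofAdd (Pi.single i 1))) -
         (MonoidAlgebra.of (ZMod p) (Multiplicative (Fin k → ZMod p))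
            (Multiplicative.ofAdd (Pi.single j 1))))) * s = 0) :
    s = 0 := by
  have hfact : (k.factorial : ZMod p) ≠ 0 := by
    rw [Ne, ZMod.natCast_eq_zero_iff, hp.dvd_factorial]
    omega
  ext γ
  have hpair :=
    MonoidAlgebra.coeff_one_det_zmodPiGenerator_pow_val_neg_mul (Multiplicative.toAdd γ) s
  rw [MonoidAlgebra.det_zmodPiGenerator_pow_mul_eq_zero hann, MonoidAlgebra.coeff_zero,
    Finsupp.zero_apply] at hpair
  simp only [hskew, ← mul_assoc, ← Int.cast_mul, ← Units.val_mul, Int.units_mul_self,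
    Units.val_one, Int.cast_one, one_mul, sum_const, card_univ, Fintype.card_perm,
    Fintype.card_fin, nsmul_eq_mul] at hpair
  simpa using (mul_eq_zero.mp hpair.symm).resolve_left hfact

/-- Let `G = C_p^k` with generators `x_1,…,x_k` and identify `𝔽_p[G]` with functions
`φ : 𝔽_p^k → 𝔽_p` via `s = ∑_γ φ(γ) x^γ`. If `s` is skew-symmetric
(i.e. `φ(γ∘σ⁻¹) = sgn(σ)·φ(γ)` for all permutations `σ`, and `φ(γ) = 0` whenever two
coordinates of `γ` coincide) and `(∏_{1≤i<j≤k}(x_i - x_j)) · s = 0`, then `s = 0`. -/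
theorem skew_symmetric_annihilator_vandermonde (p k : ℕ) (hp : p.Prime) [Fact p.Prime]
    (hk : k < p)
    (s : MonoidAlgebra (ZMod p) (Multiplicative (Fin k → ZMod p)))
    (hskew : ∀ (σ : Equiv.Perm (Fin k)) (γ : Fin k → ZMod p),
      s.coeff (Multiplicative.ofAdd (γ ∘ ⇑σ⁻¹)) =
        ((Equiv.Perm.sign σ : ℤ) : ZMod p) * s.coeff (Multiplicative.ofAdd γ))
    (halt : ∀ γ : Fin k → ZMod p, (∃ i j : Fin k, i ≠ j ∧ γ i = γ j) →
      s.coeff (Multiplicative.ofAdd γ) = 0)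
    (hann : (∏ i : Fin k, ∏ j ∈ Finset.Ioi i,
        ((MonoidAlgebra.of (ZMod p) (Multiplicative (Fin k → ZMod p))
            (Multiplicative.ofAdd (Pi.single i 1))) -
         (MonoidAlgebra.of (ZMod p) (Multiplicative (Fin k → ZMod p))
            (Multiplicative.ofAdd (Pi.single j 1))))) * s = 0) :
    s = 0 :=
  skew_symmetric_annihilator_vandermonde_general p k hp hk s hskew hann
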